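/- Corollary 1(i) (generalization bound on the target expected disagreement): for any target domain T with marginal T_X, any prior probability measure π on H, any δ ∈ (0,1], and any c > 0, with probability at least 1−δ over the draw of T = {x_j}_{j=1}^{m_t} ~ (T_X)^{m_t}, simultaneously for every probability measure ρ on H: d_{T_X}(ρ) ≤ (c/(1−e^{−c})) · [ d̂_T(ρ) + (2·KL(ρ‖π) + ln(1/δ)) / (m_t·c) ]. -/

import Mathlib

/-!
For a loss `ℓ` with values in `[0,1]` and true risk `R(w)`, convexity of `exp` gives
`E exp (-c ℓ) ≤ 1 - (1 - e^{-c}) R(w) = exp (-C(R(w)))` (Catoni's function `C`), so by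
independence `E_S exp (m C(R(w)) - c Σⱼ ℓ(w, xⱼ)) ≤ 1` for every `w`. By Fubini and Markov's
inequality, with probability `≥ 1 - δ` the prior average of this exponential is `< 1/δ`; the
Donsker–Varadhan change of measure then bounds `E_ρ [m C(R) - c Σⱼ ℓ]` by `KL(ρ‖π) + ln(1/δ)` for
all posteriors `ρ` simultaneously, and `C(r) ≥ (1 - e^{-c}) r` yields Catoni's bound.

The disagreement is the risk of the `[0,1]`-valued loss `ℓ((h,h'), x) = 1[h(x) ≠ h'(x)]` on pairs
of hypotheses; Catoni's bound with prior `π ⊗ π` and posterior `ρ ⊗ ρ` gives the theorem, since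
`KL(ρ ⊗ ρ ‖ π ⊗ π) = 2 KL(ρ‖π)`.
-/

open MeasureTheory

noncomputable section

/-- The 0-1 loss on labels in `{−1,+1}`, encoded by `Bool` (`false ↦ −1`, `true ↦ +1`). -/
def l01 (a b : Bool) : ℝ := if a = b then 0 else 1

variable {X H : Type*} [MeasurableSpace X] [MeasurableSpace H]

/-- The Kullback–Leibler divergence `KL(ρ‖π) = E_{h~ρ} ln(dρ/dπ)` (for `ρ ≪ π` with
integrable log-likelihood ratio, i.e. the cases where `KL(ρ‖π) < +∞`). -/
def klReal (ρ π : Measure H) : ℝ := ∫ h, llr ρ π h ∂ρ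

/-- The expected disagreement `d_{D_X}(ρ) = E_{(h,h')~ρ⊗ρ} E_{x~D_X} ℓ(h(x),h'(x))`. -/
def expDisag (F : H → X → Bool) (D : Measure X) (ρ : Measure H) : ℝ :=
  ∫ p, ∫ x, l01 (F p.1 x) (F p.2 x) ∂D ∂(ρ.prod ρ)

section KullbackLeibler

open InformationTheory Real

variable {α β : Type*} [MeasurableSpace α] [MeasurableSpace β]

lemma integral_llr_nonneg {μ ν : Measure α} [IsProbabilityMeasure μ] [IsProbabilityMeasure ν]
    (hμν : μ ≪ ν) (hint : Integrable (llr μ ν) μ) : 0 ≤ ∫ x, llr μ ν x ∂μ := by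
  simpa using integral_llr_add_sub_measure_univ_nonneg hμν hint

lemma integral_le_integral_llr_add_log_integral_exp {μ ν : Measure α}
    [IsProbabilityMeasure μ] [IsProbabilityMeasure ν] (hμν : μ ≪ ν)
    (hint : Integrable (llr μ ν) μ) {f : α → ℝ} (hfμ : Integrable f μ)
    (hfν : Integrable (fun x ↦ exp (f x)) ν) :
    ∫ x, f x ∂μ ≤ ∫ x, llr μ ν x ∂μ + log (∫ x, exp (f x) ∂ν) := by
  have : IsProbabilityMeasure (ν.tilted f) := isProbabilityMeasure_tilted hfν
  have := integral_llr_nonneg (hμν.trans (absolutelyContinuous_tilted hfν))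
    (integrable_llr_tilted_right hμν hfμ hint hfν)
  rw [integral_llr_tilted_right hμν hfμ hfν hint] at this
  linarith

lemma klDiv_prod_comm (μ ν : Measure α) (μ' ν' : Measure β) [IsFiniteMeasure μ]
    [IsFiniteMeasure ν] [IsFiniteMeasure μ'] [IsFiniteMeasure ν'] :
    klDiv (μ.prod μ') (ν.prod ν') = klDiv (μ'.prod μ) (ν'.prod ν) := by
  refine le_antisymm ?_ ?_
  · conv_lhs => rw [← Measure.prod_swap (μ := μ'), ← Measure.prod_swap (μ := ν')]
    exact klDiv_map_le _ _ measurable_swap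
  · conv_lhs => rw [← Measure.prod_swap (μ := μ), ← Measure.prod_swap (μ := ν)]
    exact klDiv_map_le _ _ measurable_swap

lemma klDiv_prod_prod (μ₁ ν₁ : Measure α) (μ₂ ν₂ : Measure β) [IsProbabilityMeasure μ₁]
    [IsFiniteMeasure ν₁] [IsProbabilityMeasure μ₂] [IsProbabilityMeasure ν₂] :
    klDiv (μ₁.prod μ₂) (ν₁.prod ν₂) = klDiv μ₁ ν₁ + klDiv μ₂ ν₂ := by
  rw [← Measure.compProd_const, ← Measure.compProd_const, klDiv_compProd_eq_add,
    Measure.compProd_const, Measure.compProd_const, klDiv_prod_comm, ← Measure.compProd_const,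
    ← Measure.compProd_const, klDiv_compProd_left]

variable {μ₁ ν₁ : Measure α} {μ₂ ν₂ : Measure β} [IsProbabilityMeasure μ₁]
    [IsProbabilityMeasure ν₁] [IsProbabilityMeasure μ₂] [IsProbabilityMeasure ν₂]

lemma integrable_llr_prod (h₁ : μ₁ ≪ ν₁) (h₂ : μ₂ ≪ ν₂) (hi₁ : Integrable (llr μ₁ ν₁) μ₁)
    (hi₂ : Integrable (llr μ₂ ν₂) μ₂) :
    Integrable (llr (μ₁.prod μ₂) (ν₁.prod ν₂)) (μ₁.prod μ₂) := by
  have : klDiv (μ₁.prod μ₂) (ν₁.prod ν₂) ≠ ⊤ := by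
    rw [klDiv_prod_prod]
    exact ENNReal.add_ne_top.2 ⟨klDiv_ne_top h₁ hi₁, klDiv_ne_top h₂ hi₂⟩
  exact (klDiv_ne_top_iff.1 this).2

lemma integral_llr_prod (h₁ : μ₁ ≪ ν₁) (h₂ : μ₂ ≪ ν₂) (hi₁ : Integrable (llr μ₁ ν₁) μ₁)
    (hi₂ : Integrable (llr μ₂ ν₂) μ₂) :
    ∫ p, llr (μ₁.prod μ₂) (ν₁.prod ν₂) p ∂(μ₁.prod μ₂)
      = ∫ x, llr μ₁ ν₁ x ∂μ₁ + ∫ y, llr μ₂ ν₂ y ∂μ₂ := by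
  simp only [← toReal_klDiv_of_measure_eq (h₁.prod h₂) (by simp),
    ← toReal_klDiv_of_measure_eq h₁ (by simp), ← toReal_klDiv_of_measure_eq h₂ (by simp),
    klDiv_prod_prod]
  exact ENNReal.toReal_add (klDiv_ne_top h₁ hi₁) (klDiv_ne_top h₂ hi₂)

end KullbackLeibler

section PACBayes

open Real

variable {W S : Type*} [MeasurableSpace W] [MeasurableSpace S]
  {P : Measure S} [IsProbabilityMeasure P] {pr : Measure W} [IsProbabilityMeasure pr]
  {f : W → S → ℝ} {B δ : ℝ}

lemma measure_one_div_le_integral_exp_le (hf : Measurable (Function.uncurry f))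
    (hfB : ∀ w s, f w s ≤ B) (hmgf : ∀ w, ∫ s, exp (f w s) ∂P ≤ 1) (hδ : 0 < δ) :
    P {s | 1 / δ ≤ ∫ w, exp (f w s) ∂pr} ≤ ENNReal.ofReal δ := by
  have hint : Integrable (Function.uncurry fun s w ↦ exp (f w s)) (P.prod pr) := by
    refine .of_bound (measurable_exp.comp (hf.comp measurable_swap)).aestronglyMeasurable
      (exp B) (ae_of_all _ fun ⟨s, w⟩ ↦ ?_)
    simpa [abs_of_pos (exp_pos _)] using hfB w s
  have htotal : ∫ s, ∫ w, exp (f w s) ∂pr ∂P ≤ 1 := by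
    rw [integral_integral_swap hint]
    simpa using integral_mono_of_nonneg (ae_of_all _ fun w ↦ integral_nonneg fun s ↦
      (exp_pos (f w s)).le) (integrable_const (1 : ℝ)) (ae_of_all pr hmgf)
  have hmarkov := mul_meas_ge_le_integral_of_nonneg
    (ae_of_all _ fun s ↦ integral_nonneg fun w ↦ (exp_pos (f w s)).le) hint.integral_prod_left
    (1 / δ)
  rw [← ofReal_measureReal]
  refine ENNReal.ofReal_le_ofReal ?_
  rw [one_div, inv_mul_le_iff₀ hδ] at hmarkov
  rw [one_div]
  nlinarith

theorem pacBayes_bound (hf : Measurable (Function.uncurry f)) (hfB : ∀ w s, |f w s| ≤ B)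
    (hmgf : ∀ w, ∫ s, exp (f w s) ∂P ≤ 1) (hδ : 0 < δ) :
    ENNReal.ofReal (1 - δ) ≤ P {s | ∀ μ : Measure W, IsProbabilityMeasure μ → μ ≪ pr →
      Integrable (llr μ pr) μ → ∫ w, f w s ∂μ ≤ ∫ w, llr μ pr w ∂μ + log (1 / δ)} := by
  set bad := {s | 1 / δ ≤ ∫ w, exp (f w s) ∂pr}
  have hgood : badᶜ ⊆ {s | ∀ μ : Measure W, IsProbabilityMeasure μ → μ ≪ pr →
      Integrable (llr μ pr) μ → ∫ w, f w s ∂μ ≤ ∫ w, llr μ pr w ∂μ + log (1 / δ)} := by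
    intro s hs μ _ hμ hllr
    have hfs : Measurable (f · s) := hf.comp (measurable_id.prodMk measurable_const)
    have hexp : Integrable (fun w ↦ exp (f w s)) pr :=
      .of_bound (measurable_exp.comp hfs).aestronglyMeasurable (exp B) (ae_of_all _ fun w ↦ by
        simpa [abs_of_pos (exp_pos _)] using (le_abs_self _).trans (hfB w s))
    have hlog : log (∫ w, exp (f w s) ∂pr) ≤ log (1 / δ) :=
      log_le_log (integral_exp_pos hexp) (not_le.1 (Set.notMem_ofPred_iff.1 hs)).le
    have := integral_le_integral_llr_add_log_integral_exp hμ hllr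
      (.of_bound hfs.aestronglyMeasurable B (ae_of_all _ fun w ↦ hfB w s)) hexp
    linarith
  calc ENNReal.ofReal (1 - δ) = 1 - ENNReal.ofReal δ := by
        rw [ENNReal.ofReal_sub _ hδ.le, ENNReal.ofReal_one]
    _ ≤ 1 - P bad := tsub_le_tsub_left (measure_one_div_le_integral_exp_le hf
        (fun w s ↦ (le_abs_self _).trans (hfB w s)) hmgf hδ) 1
    _ ≤ P badᶜ := by simpa [add_comm] using measure_univ_le_add_compl (μ := P) bad
    _ ≤ _ := measure_mono hgood

end PACBayes

section Catoni

open Real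

lemma exp_neg_mul_le_one_sub_mul (c : ℝ) {x : ℝ} (hx₀ : 0 ≤ x) (hx₁ : x ≤ 1) :
    exp (-(c * x)) ≤ 1 - (1 - exp (-c)) * x := by
  have := convexOn_exp.2 (Set.mem_univ 0) (Set.mem_univ (-c)) (sub_nonneg.2 hx₁) hx₀
    (sub_add_cancel 1 x)
  simp only [smul_eq_mul, mul_zero, zero_add, exp_zero, mul_one] at this
  rw [show -(c * x) = x * -c by ring]
  linarith

/-- Catoni's function: `exp (-catoni c r)` is the bound of `exp_neg_mul_le_one_sub_mul`
integrated against a loss of mean `r`. -/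
def catoni (c r : ℝ) : ℝ := -log (1 - (1 - exp (-c)) * r)

lemma measurable_catoni (c : ℝ) : Measurable (catoni c) := by
  unfold catoni
  fun_prop

variable {c r : ℝ}

lemma exp_neg_le_one_sub_mul (hc : 0 ≤ c) (hr₁ : r ≤ 1) :
    exp (-c) ≤ 1 - (1 - exp (-c)) * r := by
  nlinarith [exp_le_one_iff.2 (neg_nonpos.2 hc)]

lemma catoni_le (hc : 0 ≤ c) (hr₁ : r ≤ 1) : catoni c r ≤ c := by
  have := log_le_log (exp_pos _) (exp_neg_le_one_sub_mul hc hr₁)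
  rw [log_exp] at this
  rw [catoni]
  linarith

lemma catoni_nonneg (hc : 0 ≤ c) (hr₀ : 0 ≤ r) (hr₁ : r ≤ 1) : 0 ≤ catoni c r := by
  rw [catoni, neg_nonneg]
  exact log_nonpos ((exp_pos _).le.trans (exp_neg_le_one_sub_mul hc hr₁))
    (by nlinarith [exp_le_one_iff.2 (neg_nonpos.2 hc)])

lemma mul_le_catoni (hc : 0 ≤ c) (hr₁ : r ≤ 1) : (1 - exp (-c)) * r ≤ catoni c r := by
  have := log_le_sub_one_of_pos ((exp_pos _).trans_le (exp_neg_le_one_sub_mul hc hr₁))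
  rw [catoni]
  linarith

lemma exp_catoni_mul (hc : 0 ≤ c) (hr₁ : r ≤ 1) :
    exp (catoni c r) * (1 - (1 - exp (-c)) * r) = 1 := by
  have hpos := (exp_pos _).trans_le (exp_neg_le_one_sub_mul hc hr₁)
  rw [catoni, exp_neg, exp_log hpos, inv_mul_cancel₀ hpos.ne']

lemma abs_mul_catoni_sub_mul_le (hc : 0 ≤ c) (hr₀ : 0 ≤ r) (hr₁ : r ≤ 1) {n e : ℝ}
    (he₀ : 0 ≤ e) (he₁ : e ≤ n) : |n * catoni c r - c * e| ≤ n * c := by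
  have := catoni_nonneg hc hr₀ hr₁
  have := catoni_le hc hr₁
  rw [abs_le]
  constructor <;> nlinarith

lemma le_of_mul_one_sub_exp_neg_le (hc : 0 < c) {n D S K : ℝ} (hn : 0 < n)
    (h : n * ((1 - exp (-c)) * D) - c * S ≤ K) :
    D ≤ c / (1 - exp (-c)) * (1 / n * S + K / (n * c)) := by
  have ha : 0 < 1 - exp (-c) := sub_pos.2 (exp_lt_one_iff.2 (neg_neg_of_pos hc))
  rw [show c / (1 - exp (-c)) * (1 / n * S + K / (n * c)) = (c * S + K) / (n * (1 - exp (-c))) by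
    field_simp, le_div_iff₀ (by positivity)]
  linarith

variable {W Z : Type*} [MeasurableSpace W] [MeasurableSpace Z] {μZ : Measure Z}
  [IsProbabilityMeasure μZ]

lemma integral_le_one (μ : Measure Z) [IsProbabilityMeasure μ] {φ : Z → ℝ}
    (hφ₀ : ∀ z, 0 ≤ φ z) (hφ₁ : ∀ z, φ z ≤ 1) : ∫ z, φ z ∂μ ≤ 1 := by
  simpa using integral_mono_of_nonneg (ae_of_all _ hφ₀) (integrable_const (1 : ℝ))
    (ae_of_all μ hφ₁)

lemma integral_exp_neg_mul_le {φ : Z → ℝ} (hφ : Measurable φ) (hφ₀ : ∀ z, 0 ≤ φ z)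
    (hφ₁ : ∀ z, φ z ≤ 1) :
    ∫ z, exp (-(c * φ z)) ∂μZ ≤ 1 - (1 - exp (-c)) * ∫ z, φ z ∂μZ := by
  have hφi : Integrable φ μZ :=
    .of_mem_Icc 0 1 hφ.aemeasurable (ae_of_all _ fun z ↦ ⟨hφ₀ z, hφ₁ z⟩)
  calc ∫ z, exp (-(c * φ z)) ∂μZ ≤ ∫ z, (1 - (1 - exp (-c)) * φ z) ∂μZ :=
        integral_mono_of_nonneg (ae_of_all _ fun z ↦ (exp_pos _).le)
          ((integrable_const _).sub (hφi.const_mul _))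
          (ae_of_all _ fun z ↦ exp_neg_mul_le_one_sub_mul c (hφ₀ z) (hφ₁ z))
    _ = 1 - (1 - exp (-c)) * ∫ z, φ z ∂μZ := by
        rw [integral_sub (integrable_const _) (hφi.const_mul _), integral_const_mul]
        simp

lemma integral_exp_catoni_sub_le_one (hc : 0 ≤ c) {φ : Z → ℝ} (hφ : Measurable φ)
    (hφ₀ : ∀ z, 0 ≤ φ z) (hφ₁ : ∀ z, φ z ≤ 1) (n : ℕ) :
    ∫ s, exp (n * catoni c (∫ z, φ z ∂μZ) - c * ∑ j : Fin n, φ (s j))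
      ∂(Measure.pi fun _ ↦ μZ) ≤ 1 := by
  set r := ∫ z, φ z ∂μZ
  have hsplit : ∀ s : Fin n → Z, exp (n * catoni c r - c * ∑ j, φ (s j))
      = exp (catoni c r) ^ n * ∏ j, exp (-(c * φ (s j))) := fun s ↦ by
    rw [← exp_nat_mul, ← exp_sum, ← exp_add, Finset.mul_sum, Finset.sum_neg_distrib,
      sub_eq_add_neg]
  simp_rw [hsplit]
  rw [integral_const_mul, integral_fintype_prod_eq_pow (fun z ↦ exp (-(c * φ z))),
    Fintype.card_fin, ← mul_pow, ← one_pow n, ← exp_catoni_mul hc (integral_le_one μZ hφ₀ hφ₁)]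
  gcongr
  exact integral_exp_neg_mul_le hφ hφ₀ hφ₁

lemma integral_le_of_integral_catoni_sub_le (hc : 0 < c) {n : ℕ} (hn : 0 < n)
    {μ : Measure W} [IsProbabilityMeasure μ] {R E : W → ℝ} (hR : Measurable R)
    (hR₀ : ∀ w, 0 ≤ R w) (hR₁ : ∀ w, R w ≤ 1) (hE : Measurable E) (hE₀ : ∀ w, 0 ≤ E w)
    (hE₁ : ∀ w, E w ≤ n) {K : ℝ} (h : ∫ w, (n * catoni c (R w) - c * E w) ∂μ ≤ K) :
    ∫ w, R w ∂μ ≤ c / (1 - exp (-c)) * (∫ w, 1 / (n : ℝ) * E w ∂μ + K / (n * c)) := by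
  have hCi : Integrable (fun w ↦ catoni c (R w)) μ :=
    .of_mem_Icc 0 c ((measurable_catoni c).comp hR).aemeasurable
      (ae_of_all _ fun w ↦ ⟨catoni_nonneg hc.le (hR₀ w) (hR₁ w), catoni_le hc.le (hR₁ w)⟩)
  have hEi : Integrable E μ :=
    .of_mem_Icc 0 n hE.aemeasurable (ae_of_all _ fun w ↦ ⟨hE₀ w, hE₁ w⟩)
  have hRi : Integrable R μ :=
    .of_mem_Icc 0 1 hR.aemeasurable (ae_of_all _ fun w ↦ ⟨hR₀ w, hR₁ w⟩)
  have hrelax : (1 - exp (-c)) * ∫ w, R w ∂μ ≤ ∫ w, catoni c (R w) ∂μ := by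
    rw [← integral_const_mul]
    exact integral_mono (hRi.const_mul _) hCi fun w ↦ mul_le_catoni hc.le (hR₁ w)
  rw [integral_sub (hCi.const_mul _) (hEi.const_mul _), integral_const_mul,
    integral_const_mul] at h
  rw [integral_const_mul]
  refine le_of_mul_one_sub_exp_neg_le hc (Nat.cast_pos.2 hn) (le_trans ?_ h)
  gcongr

theorem catoni_pacBayes_bound {g : W → Z → ℝ} (hg : Measurable (Function.uncurry g))
    (hg₀ : ∀ w z, 0 ≤ g w z) (hg₁ : ∀ w z, g w z ≤ 1) (pr : Measure W) [IsProbabilityMeasure pr]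
    {n : ℕ} (hn : 0 < n) {δ : ℝ} (hδ : 0 < δ) (hc : 0 < c) :
    ENNReal.ofReal (1 - δ) ≤ (Measure.pi fun _ : Fin n ↦ μZ)
      {s | ∀ μ : Measure W, IsProbabilityMeasure μ → μ ≪ pr → Integrable (llr μ pr) μ →
        ∫ w, ∫ z, g w z ∂μZ ∂μ ≤ (c / (1 - exp (-c))) *
          (∫ w, (1 / (n : ℝ)) * ∑ j : Fin n, g w (s j) ∂μ
            + (∫ w, llr μ pr w ∂μ + log (1 / δ)) / (n * c))} := by
  set R : W → ℝ := fun w ↦ ∫ z, g w z ∂μZ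
  have hR : Measurable R := hg.stronglyMeasurable.integral_prod_right'.measurable
  have hR₀ : ∀ w, 0 ≤ R w := fun w ↦ integral_nonneg (hg₀ w)
  have hR₁ : ∀ w, R w ≤ 1 := fun w ↦ integral_le_one μZ (hg₀ w) (hg₁ w)
  have hemp : Measurable fun q : W × (Fin n → Z) ↦ ∑ j, g q.1 (q.2 j) :=
    Finset.measurable_sum _ fun j _ ↦
      hg.comp (measurable_fst.prodMk ((measurable_pi_apply j).comp measurable_snd))
  have hemp₀ : ∀ w (s : Fin n → Z), 0 ≤ ∑ j, g w (s j) := fun w s ↦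
    Finset.sum_nonneg fun j _ ↦ hg₀ w (s j)
  have hemp₁ : ∀ w (s : Fin n → Z), ∑ j, g w (s j) ≤ n := fun w s ↦ by
    simpa using Finset.sum_le_sum fun j (_ : j ∈ Finset.univ) ↦ hg₁ w (s j)
  refine (pacBayes_bound (P := Measure.pi fun _ : Fin n ↦ μZ) (pr := pr)
    (f := fun w s ↦ n * catoni c (R w) - c * ∑ j, g w (s j))
    ((((measurable_catoni c).comp (hR.comp measurable_fst)).const_mul _).sub (hemp.const_mul c))
    (fun w s ↦ abs_mul_catoni_sub_mul_le hc.le (hR₀ w) (hR₁ w) (hemp₀ w s) (hemp₁ w s))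
    (fun w ↦ integral_exp_catoni_sub_le_one hc.le (hg.comp measurable_prodMk_left) (hg₀ w)
      (hg₁ w) n) hδ).trans (measure_mono fun s hs μ _ hμ hllr ↦ ?_)
  exact integral_le_of_integral_catoni_sub_le hc hn hR hR₀ hR₁
    (hemp.comp (measurable_id.prodMk measurable_const)) (hemp₀ · s) (hemp₁ · s) (hs μ ‹_› hμ hllr)

end Catoni

lemma l01_nonneg (a b : Bool) : 0 ≤ l01 a b := by
  unfold l01
  split_ifs <;> norm_num

lemma l01_le_one (a b : Bool) : l01 a b ≤ 1 := by
  unfold l01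
  split_ifs <;> norm_num

lemma measurable_l01_disagreement {F : H → X → Bool} (hF : Measurable (Function.uncurry F)) :
    Measurable (Function.uncurry fun (p : H × H) (x : X) ↦ l01 (F p.1 x) (F p.2 x)) :=
  (measurable_of_countable fun ab : Bool × Bool ↦ l01 ab.1 ab.2).comp
    ((hF.comp (measurable_fst.fst.prodMk measurable_snd)).prodMk
      (hF.comp (measurable_fst.snd.prodMk measurable_snd)))

/-- Corollary 1(i) (generalization bound on the target expected disagreement): for any target
domain `T` with marginal `T_X`, any prior `π` on `H`, any `δ ∈ (0,1]` and any `c > 0`, with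
probability at least `1−δ` over an i.i.d. `m_t`-sample from `T_X`, simultaneously for every
posterior `ρ` on `H` (with `KL(ρ‖π) < ∞`):
`d_{T_X}(ρ) ≤ (c/(1−e^{−c})) · [ d̂_T(ρ) + (2·KL(ρ‖π) + ln(1/δ))/(m_t·c) ]`. -/
theorem disagreement_generalization_bound
    (F : H → X → Bool) (hF : Measurable (Function.uncurry F))
    (T : Measure (X × Bool)) [IsProbabilityMeasure T]
    (π : Measure H) [IsProbabilityMeasure π]
    (mt : ℕ) (hmt : 0 < mt)
    (δ : ℝ) (hδ : δ ∈ Set.Ioc (0 : ℝ) 1)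
    (c : ℝ) (hc : 0 < c) :
    (Measure.pi fun _ : Fin mt => T.map Prod.fst)
      {s | ∀ ρ : Measure H, IsProbabilityMeasure ρ → ρ ≪ π →
        Integrable (llr ρ π) ρ →
        expDisag F (T.map Prod.fst) ρ
          ≤ (c / (1 - Real.exp (-c))) *
              ((∫ p, (1 / (mt : ℝ)) * ∑ j : Fin mt, l01 (F p.1 (s j)) (F p.2 (s j))
                  ∂(ρ.prod ρ))
                + (2 * klReal ρ π + Real.log (1 / δ)) / ((mt : ℝ) * c))}
      ≥ ENNReal.ofReal (1 - δ) := by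
  have : IsProbabilityMeasure (T.map Prod.fst) :=
    Measure.isProbabilityMeasure_map measurable_fst.aemeasurable
  refine (catoni_pacBayes_bound (measurable_l01_disagreement hF) (fun _ _ ↦ l01_nonneg _ _)
    (fun _ _ ↦ l01_le_one _ _) (π.prod π) hmt hδ.1 hc).trans
    (measure_mono fun s hs ρ _ hρ hllr ↦ ?_)
  have := hs (ρ.prod ρ) inferInstance (hρ.prod hρ) (integrable_llr_prod hρ hρ hllr hllr)
  rwa [integral_llr_prod hρ hρ hllr hllr, ← two_mul] at this

end
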